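/- arXiv:2210.11296 — 3 statements merged into one kernel-verified Lean document; each statement's English description precedes it below -/
import Mathlib

section
/- Let Z, X, A be finite sets, δ ∈ (0,1], T a positive integer, and R : X × A × Z → ℝ. Suppose the functions V_t : Z × X → ℝ (t = 1,...,T+1) satisfy V_{T+1} ≡ 0 and for each t, each z, each x: (a) V_t(z,x) = E^{γ̃_t(·|x)}[ R(x, A_t, z) + δ V_{t+1}(φ(z, γ̃_t), X_{t+1}) | z, x ] for the prescription γ̃_t = θ_t[z], and (b) for every alternative prescription component γ_t(·|x) ∈ P(A), V_t(z,x) ≥ E^{γ_t(·|x)}[ R(x, A_t, z) + δ V_{t+1}(φ(z, γ̃_t), X_{t+1}) | z, x ], where the expectation is over (X_t^{[1:N-1]}, A_t, X_{t+1}) with measure z(x^{[1:N-1]}) ∏_i γ(a^i|x^i) Q(x_{t+1} | z, x^{[1:N-1]}, x, a^{[1:N-1]}, a_t), and the mean-field trajectory is z_{n+1} = φ(z_n, γ̃_n). Then the strategy σ̃_t(a|z_{1:t}, x_{1:t}) = γ̃_t(a|x_t) satisfies: for all t, all histories (z_{1:t}, x_{1:t}) consistent with the trajectory, and all alternative strategies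 σ, E^{σ̃}[ Σ_{n=t}^T δ^{n-t} R(X_n, A_n, Z_n) | z_{1:t}, x_{1:t} ] ≥ E^{σ}[ Σ_{n=t}^T δ^{n-t} R(X_n, A_n, Z_n) | z_{1:t}, x_{1:t} ]. -/
/-!
Backward induction along the mean-field trajectory `z`. Write `W t x = V t (z t) x`; since
`z (t + 1) = φ (z t) (θ t (z t))`, hypothesis (a) says that `W` is the value of the Markovian
strategy `θ t (z t)` and (b) that `W t x` dominates the one-stage value of every action
distribution against the continuation `W (t + 1)`. The one-stage value is monotone in the
continuation, so by induction on the number of remaining stages the reward-to-go of any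
history-dependent deviation is at most `W`, while that of the Markovian strategy equals `W`.
-/

/-- Reward-to-go of a single (possibly deviating) player over `k` remaining stages,
starting at time `t` with private history `h` and current type `x`, when the mean-field
trajectory is `z`, the rest of the population uses prescriptions `γ` (entering the
single-player transition kernel `Tr`), and the player uses the history-dependent
behavioral strategy `σ`. -/
noncomputable def rtg {Z X A : Type*} [Fintype X] [Fintype A]
    (Tr : Z → (X → A → ℝ) → X → A → X → ℝ)
    (R : X → A → Z → ℝ) (δ : ℝ) (z : ℕ → Z) (γ : ℕ → X → A → ℝ)
    (σ : ℕ → List X → A → ℝ) : ℕ → ℕ → List X → X → ℝ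
  | 0, _, _, _ => 0
  | k + 1, t, h, x => ∑ a, σ t (h ++ [x]) a *
      (R x a (z t) + δ * ∑ x', Tr (z t) (γ t) x a x' *
        rtg Tr R δ z γ σ k (t + 1) (h ++ [x]) x')

section Bellman

variable {Z X A : Type*} [Fintype X] [Fintype A]
  (Tr : Z → (X → A → ℝ) → X → A → X → ℝ) (R : X → A → Z → ℝ) (δ : ℝ)

noncomputable def stageValue (z : Z) (g : X → A → ℝ) (x : X) (p : A → ℝ) (W : X → ℝ) : ℝ :=
  ∑ a, p a * (R x a z + δ * ∑ x', Tr z g x a x' * W x')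

variable {Tr R δ}

theorem stageValue_mono {z : Z} {g : X → A → ℝ} {x : X} {p : A → ℝ} {W W' : X → ℝ}
    (hTr : ∀ a x', 0 ≤ Tr z g x a x') (hδ : 0 ≤ δ) (hp : ∀ a, 0 ≤ p a)
    (hW : ∀ x', W x' ≤ W' x') :
    stageValue Tr R δ z g x p W ≤ stageValue Tr R δ z g x p W' := by
  unfold stageValue
  gcongr with a _ x'
  · exact hp a
  · exact hTr a x'
  · exact hW x'

theorem rtg_succ (z : ℕ → Z) (γ : ℕ → X → A → ℝ) (σ : ℕ → List X → A → ℝ)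
    (k t : ℕ) (h : List X) (x : X) :
    rtg Tr R δ z γ σ (k + 1) t h x =
      stageValue Tr R δ (z t) (γ t) x (σ t (h ++ [x])) (rtg Tr R δ z γ σ k (t + 1) (h ++ [x])) :=
  rfl

def markovStrategy [Inhabited X] (π : ℕ → X → A → ℝ) : ℕ → List X → A → ℝ :=
  fun n h a => π n (h.getLastD default) a

theorem rtg_markovStrategy_eq [Inhabited X] {z : ℕ → Z} {γ π : ℕ → X → A → ℝ}
    {W : ℕ → X → ℝ} {T : ℕ} (hT : ∀ x, W (T + 1) x = 0)
    (hW : ∀ t, 1 ≤ t → t ≤ T → ∀ x,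
      W t x = stageValue Tr R δ (z t) (γ t) x (π t x) (W (t + 1))) :
    ∀ k t, t + k = T + 1 → 1 ≤ t → ∀ h x,
      rtg Tr R δ z γ (markovStrategy π) k t h x = W t x := by
  intro k
  induction k with
  | zero =>
    intro t ht _ h x
    obtain rfl : t = T + 1 := by omega
    exact (hT x).symm
  | succ k ih =>
    intro t ht ht1 h x
    rw [rtg_succ, hW t ht1 (by omega)]
    congr 1
    · funext a
      simp only [markovStrategy, List.getLastD_concat]
    · funext x'
      exact ih (t + 1) (by omega) (by omega) _ _

theorem rtg_le_of_stageValue_le {z : ℕ → Z} {γ : ℕ → X → A → ℝ} {σ : ℕ → List X → A → ℝ}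
    {W : ℕ → X → ℝ} {T : ℕ} (hTr : ∀ z g x a x', 0 ≤ Tr z g x a x') (hδ : 0 ≤ δ)
    (hσ0 : ∀ t h a, 0 ≤ σ t h a) (hσ1 : ∀ t h, ∑ a, σ t h a = 1)
    (hT : ∀ x, 0 ≤ W (T + 1) x)
    (hW : ∀ t, 1 ≤ t → t ≤ T → ∀ x (p : A → ℝ), (∀ a, 0 ≤ p a) → ∑ a, p a = 1 →
      stageValue Tr R δ (z t) (γ t) x p (W (t + 1)) ≤ W t x) :
    ∀ k t, t + k = T + 1 → 1 ≤ t → ∀ h x, rtg Tr R δ z γ σ k t h x ≤ W t x := by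
  intro k
  induction k with
  | zero =>
    intro t ht _ h x
    obtain rfl : t = T + 1 := by omega
    exact hT x
  | succ k ih =>
    intro t ht ht1 h x
    calc rtg Tr R δ z γ σ (k + 1) t h x
        ≤ stageValue Tr R δ (z t) (γ t) x (σ t (h ++ [x])) (W (t + 1)) :=
          stageValue_mono (fun _ _ => hTr _ _ _ _ _) hδ (hσ0 _ _)
            (fun x' => ih (t + 1) (by omega) (by omega) _ x')
      _ ≤ W t x := hW t ht1 (by omega) x _ (hσ0 _ _) (hσ1 _ _)

end Bellman

theorem finite_horizon_MFE_verification_general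
    {Z X A : Type*} [Fintype X] [Fintype A] [Inhabited X]
    (Tr : Z → (X → A → ℝ) → X → A → X → ℝ)
    (hTr0 : ∀ z γ x a x', 0 ≤ Tr z γ x a x')
    (R : X → A → Z → ℝ) (δ : ℝ) (hδ0 : 0 < δ) (T : ℕ)
    (φ : Z → (X → A → ℝ) → Z)
    (θ : ℕ → Z → X → A → ℝ)
    (V : ℕ → Z → X → ℝ)
    (hVT : ∀ z x, V (T + 1) z x = 0)
    (ha : ∀ t, 1 ≤ t → t ≤ T → ∀ z x,
      V t z x = ∑ a, θ t z x a * (R x a z +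
        δ * ∑ x', Tr z (θ t z) x a x' * V (t + 1) (φ z (θ t z)) x'))
    (hb : ∀ t, 1 ≤ t → t ≤ T → ∀ z x (p : A → ℝ),
      (∀ a, 0 ≤ p a) → (∑ a, p a = 1) →
      (∑ a, p a * (R x a z +
        δ * ∑ x', Tr z (θ t z) x a x' * V (t + 1) (φ z (θ t z)) x')) ≤ V t z x)
    (z : ℕ → Z) (hz : ∀ n, z (n + 1) = φ (z n) (θ n (z n)))
    (σ : ℕ → List X → A → ℝ)
    (hσ0 : ∀ t h a, 0 ≤ σ t h a) (hσ1 : ∀ t h, ∑ a, σ t h a = 1) :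
    ∀ t, 1 ≤ t → t ≤ T → ∀ (h : List X) (x : X),
      rtg Tr R δ z (fun n => θ n (z n)) σ (T + 1 - t) t h x
        ≤ rtg Tr R δ z (fun n => θ n (z n))
            (fun n h a => θ n (z n) (h.getLastD default) a) (T + 1 - t) t h x := by
  intro t ht1 htT h x
  have hk : t + (T + 1 - t) = T + 1 := by omega
  have hcont : ∀ n, V (n + 1) (φ (z n) (θ n (z n))) = V (n + 1) (z (n + 1)) :=
    fun n => by rw [hz]
  calc rtg Tr R δ z (fun n => θ n (z n)) σ (T + 1 - t) t h x
      ≤ V t (z t) x :=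
        rtg_le_of_stageValue_le (W := fun n => V n (z n)) hTr0 hδ0.le hσ0 hσ1
          (fun x' => (hVT _ x').ge)
          (fun n hn hnT x' p hp hp1 => hcont n ▸ hb n hn hnT (z n) x' p hp hp1)
          _ t hk ht1 h x
    _ = rtg Tr R δ z (fun n => θ n (z n)) (markovStrategy fun n => θ n (z n)) (T + 1 - t) t h x :=
        (rtg_markovStrategy_eq (W := fun n => V n (z n)) (fun x' => hVT _ x')
          (fun n hn hnT x' => hcont n ▸ ha n hn hnT (z n) x') _ t hk ht1 h x).symm

/-- Theorem 2: if the value functions `V` and equilibrium generating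
function `θ` solve the per-stage fixed-point equation (the prescription `θ t z` attains
the maximum while also driving the mean-field update `φ z (θ t z)`), then the induced
Markovian strategy σ̃_t(a | z_{1:t}, x_{1:t}) = θ t z_t (x_t) a dominates every
history-dependent deviation σ in total expected discounted reward from any time and
history along the mean-field trajectory. -/
theorem finite_horizon_MFE_verification
    {Z X A : Type*} [Fintype X] [Fintype A] [Inhabited X] [Nonempty A]
    (Tr : Z → (X → A → ℝ) → X → A → X → ℝ)
    (hTr0 : ∀ z γ x a x', 0 ≤ Tr z γ x a x')
    (hTr1 : ∀ z γ x a, ∑ x', Tr z γ x a x' = 1)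
    (R : X → A → Z → ℝ) (δ : ℝ) (hδ0 : 0 < δ) (hδ1 : δ ≤ 1) (T : ℕ)
    (φ : Z → (X → A → ℝ) → Z)
    (θ : ℕ → Z → X → A → ℝ)
    (hθ0 : ∀ t z x a, 0 ≤ θ t z x a) (hθ1 : ∀ t z x, ∑ a, θ t z x a = 1)
    (V : ℕ → Z → X → ℝ)
    (hVT : ∀ z x, V (T + 1) z x = 0)
    (ha : ∀ t, 1 ≤ t → t ≤ T → ∀ z x,
      V t z x = ∑ a, θ t z x a * (R x a z +
        δ * ∑ x', Tr z (θ t z) x a x' * V (t + 1) (φ z (θ t z)) x'))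
    (hb : ∀ t, 1 ≤ t → t ≤ T → ∀ z x (p : A → ℝ),
      (∀ a, 0 ≤ p a) → (∑ a, p a = 1) →
      (∑ a, p a * (R x a z +
        δ * ∑ x', Tr z (θ t z) x a x' * V (t + 1) (φ z (θ t z)) x')) ≤ V t z x)
    (z : ℕ → Z) (hz : ∀ n, z (n + 1) = φ (z n) (θ n (z n)))
    (σ : ℕ → List X → A → ℝ)
    (hσ0 : ∀ t h a, 0 ≤ σ t h a) (hσ1 : ∀ t h, ∑ a, σ t h a = 1) :
    ∀ t, 1 ≤ t → t ≤ T → ∀ (h : List X) (x : X),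
      rtg Tr R δ z (fun n => θ n (z n)) σ (T + 1 - t) t h x
        ≤ rtg Tr R δ z (fun n => θ n (z n))
            (fun n h a => θ n (z n) (h.getLastD default) a) (T + 1 - t) t h x :=
  finite_horizon_MFE_verification_general Tr hTr0 R δ hδ0 T φ θ V hVT ha hb z hz σ hσ0 hσ1
end

section
/- Let (θ, V) solve the infinite-horizon fixed-point equations (per-stage maximization plus stationary Bellman identity) with R bounded and δ ∈ (0,1), and let σ̃ be the induced stationary strategy σ̃(a | z_{1:t}, x_{1:t}) = θ[z_t](a | x_t) with mean-field trajectory z_{n+1} = φ(z_n, θ[z_n]). Then for every t, every history, and every alternative strategy σ: E^{σ̃}[ Σ_{n=t}^∞ δ^{n-t} R(X_n, A_n, Z_n) | z_{1:t}, x_{1:t} ] ≥ E^{σ}[ Σ_{n=t}^∞ δ^{n-t} R(X_n, A_n, Z_n) | z_{1:t}, x_{1:t} ], i.e., σ̃ is an infinite-horizon mean-field equilibrium strategy. -/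
open Filter

/-- Theorem 4: if (θ, V) solves the stationary infinite-horizon
fixed-point equations (per-stage maximization plus stationary Bellman identity) with R
bounded and δ ∈ (0,1), then the induced stationary strategy
σ̃(a | z_{1:t}, x_{1:t}) = θ[z_t](a|x_t), along the mean-field trajectory
z_{n+1} = φ(z_n, θ[z_n]), achieves at least the infinite-horizon discounted
reward-to-go of every alternative (history-dependent) strategy σ, from any time and
history: W_t^{σ} ≤ W_t^{σ̃} (reward-to-go taken as the limit of its finite truncations). -/
theorem infinite_horizon_MFE_verification
    {Z X A : Type*} [Fintype X] [Fintype A] [Inhabited X] [Nonempty A]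
    (Tr : Z → (X → A → ℝ) → X → A → X → ℝ)
    (hTr0 : ∀ z γ x a x', 0 ≤ Tr z γ x a x')
    (hTr1 : ∀ z γ x a, ∑ x', Tr z γ x a x' = 1)
    (R : X → A → Z → ℝ) (M : ℝ) (hR : ∀ x a z, |R x a z| ≤ M)
    (δ : ℝ) (hδ0 : 0 < δ) (hδ1 : δ < 1)
    (φ : Z → (X → A → ℝ) → Z)
    (θ : Z → X → A → ℝ)
    (hθ0 : ∀ z x a, 0 ≤ θ z x a) (hθ1 : ∀ z x, ∑ a, θ z x a = 1)
    (V : Z → X → ℝ) (B : ℝ) (hVb : ∀ z x, |V z x| ≤ B)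
    (hmax : ∀ z x (p : A → ℝ), (∀ a, 0 ≤ p a) → (∑ a, p a = 1) →
      (∑ a, p a * (R x a z + δ * ∑ x', Tr z (θ z) x a x' * V (φ z (θ z)) x'))
        ≤ ∑ a, θ z x a * (R x a z + δ * ∑ x', Tr z (θ z) x a x' * V (φ z (θ z)) x'))
    (hbell : ∀ z x,
      V z x = ∑ a, θ z x a * (R x a z + δ * ∑ x', Tr z (θ z) x a x' * V (φ z (θ z)) x'))
    (z : ℕ → Z) (hz : ∀ n, z (n + 1) = φ (z n) (θ (z n)))
    (σ : ℕ → List X → A → ℝ)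
    (hσ0 : ∀ t h a, 0 ≤ σ t h a) (hσ1 : ∀ t h, ∑ a, σ t h a = 1) :
    ∀ t, 1 ≤ t → ∀ (h : List X) (x : X) (Wσ Wσ' : ℝ),
      Tendsto (fun k => rtg Tr R δ z (fun n => θ (z n)) σ k t h x)
        atTop (nhds Wσ) →
      Tendsto (fun k => rtg Tr R δ z (fun n => θ (z n))
          (fun n h a => θ (z n) (h.getLastD default) a) k t h x)
        atTop (nhds Wσ') →
      Wσ ≤ Wσ' := by

  -- abbreviations
  intro t _ht h x Wσ Wσ' hWσ hWσ'
  set γ : ℕ → X → A → ℝ := fun n => θ (z n) with hγ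
  have hBnn : 0 ≤ B := le_trans (abs_nonneg _) (hVb (z 0) x)
  have hδnn : 0 ≤ δ := le_of_lt hδ0
  -- Lemma A: finite-horizon comparison for arbitrary σ
  have lemA : ∀ k t (h : List X) (x : X),
      rtg Tr R δ z γ σ k t h x ≤ V (z t) x + δ ^ k * B := by
    intro k
    induction k with
    | zero =>
      intro t h x
      rw [rtg]
      have := abs_le.1 (hVb (z t) x)
      simp only [pow_zero, one_mul]
      linarith [this.1]
    | succ k ih =>
      intro t h x
      rw [rtg]
      set p : A → ℝ := σ t (h ++ [x]) with hp
      have hstep1 : ∀ a, (R x a (z t) + δ * ∑ x', Tr (z t) (γ t) x a x' *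
            rtg Tr R δ z γ σ k (t + 1) (h ++ [x]) x')
          ≤ (R x a (z t) + δ * ∑ x', Tr (z t) (γ t) x a x' * V (z (t + 1)) x')
            + δ ^ (k + 1) * B := by
        intro a
        have h1 : ∑ x', Tr (z t) (γ t) x a x' * rtg Tr R δ z γ σ k (t + 1) (h ++ [x]) x'
            ≤ ∑ x', Tr (z t) (γ t) x a x' * (V (z (t + 1)) x' + δ ^ k * B) := by
          apply Finset.sum_le_sum
          intro x' _
          exact mul_le_mul_of_nonneg_left (ih (t + 1) (h ++ [x]) x') (hTr0 _ _ _ _ _)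
        have h2 : ∑ x', Tr (z t) (γ t) x a x' * (V (z (t + 1)) x' + δ ^ k * B)
            = (∑ x', Tr (z t) (γ t) x a x' * V (z (t + 1)) x') + δ ^ k * B := by
          simp only [mul_add]
          rw [Finset.sum_add_distrib, ← Finset.sum_mul, hTr1]
          ring
        have h3 := h1.trans_eq h2
        have h4 := mul_le_mul_of_nonneg_left h3 hδnn
        rw [pow_succ]
        nlinarith [h4]
      have hsum1 : ∑ a, p a * (R x a (z t) + δ * ∑ x', Tr (z t) (γ t) x a x' *
            rtg Tr R δ z γ σ k (t + 1) (h ++ [x]) x')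
          ≤ ∑ a, p a * ((R x a (z t) + δ * ∑ x', Tr (z t) (γ t) x a x' * V (z (t + 1)) x')
            + δ ^ (k + 1) * B) := by
        apply Finset.sum_le_sum
        intro a _
        exact mul_le_mul_of_nonneg_left (hstep1 a) (hσ0 _ _ _)
      have hsum2 : ∑ a, p a * ((R x a (z t) + δ * ∑ x', Tr (z t) (γ t) x a x' * V (z (t + 1)) x')
            + δ ^ (k + 1) * B)
          = (∑ a, p a * (R x a (z t) + δ * ∑ x', Tr (z t) (γ t) x a x' * V (z (t + 1)) x'))
            + δ ^ (k + 1) * B := by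
        simp only [mul_add]
        rw [Finset.sum_add_distrib, ← Finset.sum_mul, hσ1]
        ring
      have hmax' : (∑ a, p a * (R x a (z t) + δ * ∑ x', Tr (z t) (γ t) x a x' * V (z (t + 1)) x'))
          ≤ V (z t) x := by
        have hz' : z (t + 1) = φ (z t) (θ (z t)) := hz t
        rw [hγ]
        simp only [hz']
        rw [hbell (z t) x]
        exact hmax (z t) x p (fun a => hσ0 _ _ _) (hσ1 _ _)
      calc ∑ a, p a * (R x a (z t) + δ * ∑ x', Tr (z t) (γ t) x a x' *
              rtg Tr R δ z γ σ k (t + 1) (h ++ [x]) x')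
          ≤ (∑ a, p a * (R x a (z t) + δ * ∑ x', Tr (z t) (γ t) x a x' * V (z (t + 1)) x'))
            + δ ^ (k + 1) * B := hsum1.trans_eq hsum2
        _ ≤ V (z t) x + δ ^ (k + 1) * B := by linarith
  -- Lemma B: the stationary strategy's truncations converge to V
  set σ' : ℕ → List X → A → ℝ := fun n h a => θ (z n) (h.getLastD default) a with hσ'
  have lemB : ∀ k t (h : List X) (x : X),
      |rtg Tr R δ z γ σ' k t h x - V (z t) x| ≤ δ ^ k * B := by
    intro k
    induction k with
    | zero =>
      intro t h x
      rw [rtg]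
      simpa using hVb (z t) x
    | succ k ih =>
      intro t h x
      rw [rtg]
      have hlast : ∀ a, σ' t (h ++ [x]) a = θ (z t) x a := by
        intro a; simp only [hσ', List.getLastD_concat]
      have hz' : z (t + 1) = φ (z t) (θ (z t)) := hz t
      have hV : V (z t) x = ∑ a, θ (z t) x a *
          (R x a (z t) + δ * ∑ x', Tr (z t) (γ t) x a x' * V (z (t + 1)) x') := by
        rw [hγ]; simp only [hz']; exact hbell (z t) x
      simp only [hlast]
      rw [hV, ← Finset.sum_sub_distrib]
      refine (Finset.abs_sum_le_sum_abs _ _).trans ?_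
      have hterm : ∀ a ∈ Finset.univ, |θ (z t) x a *
            (R x a (z t) + δ * ∑ x', Tr (z t) (γ t) x a x' *
              rtg Tr R δ z γ σ' k (t + 1) (h ++ [x]) x')
          - θ (z t) x a *
            (R x a (z t) + δ * ∑ x', Tr (z t) (γ t) x a x' * V (z (t + 1)) x')|
          ≤ θ (z t) x a * (δ ^ (k + 1) * B) := by
        intro a _
        rw [← mul_sub, abs_mul, abs_of_nonneg (hθ0 _ _ _)]
        apply mul_le_mul_of_nonneg_left _ (hθ0 _ _ _)
        have : (R x a (z t) + δ * ∑ x', Tr (z t) (γ t) x a x' *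
              rtg Tr R δ z γ σ' k (t + 1) (h ++ [x]) x')
            - (R x a (z t) + δ * ∑ x', Tr (z t) (γ t) x a x' * V (z (t + 1)) x')
            = δ * ∑ x', Tr (z t) (γ t) x a x' *
              (rtg Tr R δ z γ σ' k (t + 1) (h ++ [x]) x' - V (z (t + 1)) x') := by
          simp only [mul_sub, Finset.sum_sub_distrib]
          ring
        rw [this, abs_mul, abs_of_nonneg hδnn]
        rw [pow_succ, show δ ^ k * δ * B = δ * (δ ^ k * B) by ring]
        apply mul_le_mul_of_nonneg_left _ hδnn
        refine (Finset.abs_sum_le_sum_abs _ _).trans ?_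
        calc ∑ x', |Tr (z t) (γ t) x a x' *
              (rtg Tr R δ z γ σ' k (t + 1) (h ++ [x]) x' - V (z (t + 1)) x')|
            ≤ ∑ x', Tr (z t) (γ t) x a x' * (δ ^ k * B) := by
              apply Finset.sum_le_sum
              intro x' _
              rw [abs_mul, abs_of_nonneg (hTr0 _ _ _ _ _)]
              exact mul_le_mul_of_nonneg_left (ih (t + 1) (h ++ [x]) x') (hTr0 _ _ _ _ _)
          _ = δ ^ k * B := by rw [← Finset.sum_mul, hTr1, one_mul]
      refine (Finset.sum_le_sum hterm).trans_eq ?_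
      rw [← Finset.sum_mul, hθ1, one_mul]
  -- δ^k * B → 0
  have hgeo : Tendsto (fun k : ℕ => δ ^ k * B) atTop (nhds 0) := by
    have := (tendsto_pow_atTop_nhds_zero_of_lt_one hδnn hδ1).mul_const B
    simpa using this
  -- Wσ' = V (z t) x
  have hWσ'V : Wσ' = V (z t) x := by
    have htend : Tendsto (fun k => rtg Tr R δ z γ σ' k t h x) atTop (nhds (V (z t) x)) := by
      rw [tendsto_iff_dist_tendsto_zero]
      apply squeeze_zero (fun k => dist_nonneg) (fun k => ?_) hgeo
      rw [Real.dist_eq]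
      exact lemB k t h x
    exact tendsto_nhds_unique hWσ' htend
  -- Wσ ≤ V (z t) x
  have hle : Wσ ≤ V (z t) x := by
    have htend : Tendsto (fun k : ℕ => V (z t) x + δ ^ k * B) atTop (nhds (V (z t) x)) := by
      simpa using (tendsto_const_nhds.add hgeo)
    exact le_of_tendsto_of_tendsto' hWσ htend (fun k => lemA k t h x)
  rw [hWσ'V]
  exact hle
end

section
/- Converse to the finite-horizon verification theorem: if σ̃ is a symmetric Markovian mean-field equilibrium (i.e., for all t and all alternative strategies σ, E^{σ̃_{t:T}}[Σ_{n=t}^T δ^{n-t} R(X_n,A_n,Z_n) | z_{1:t}, x_{1:t}] ≥ E^{σ_{t:T}}[...] along the trajectory z_{n+1} = φ(z_n, σ̃_n(·|z_n,·))), then the prescriptions γ̃_t = σ̃_t(·|z_t, ·) satisfy the per-stage fixed-point condition: γ̃_t(·|x_t) ∈ argmax_{γ_t(·|x_t)} E^{γ_t(·|x_t)}[ R(X_t, A_t, z_t) + δ V_{t+1}(φ(z_t, γ̃_t), X_{t+1}) | z_t, x_t ] for every t and x_t, where V_{t+1} is the reward-to-go under σ̃ from time t+1. -/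
lemma rtg_congr {Z X A : Type*} [Fintype X] [Fintype A]
    (Tr : Z → (X → A → ℝ) → X → A → X → ℝ)
    (R : X → A → Z → ℝ) (δ : ℝ) (z : ℕ → Z) (γ : ℕ → X → A → ℝ)
    (σ σ' : ℕ → List X → A → ℝ) :
    ∀ k t, (∀ n h a, t ≤ n → σ n h a = σ' n h a) →
      ∀ h x, rtg Tr R δ z γ σ k t h x = rtg Tr R δ z γ σ' k t h x := by
  intro k
  induction k with
  | zero => intro t _ h x; rfl
  | succ k ih =>
    intro t hagree h x
    simp only [rtg]
    refine Finset.sum_congr rfl fun a _ => ?_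
    rw [hagree t _ a le_rfl]
    have hcont : ∀ x', rtg Tr R δ z γ σ k (t + 1) (h ++ [x]) x'
        = rtg Tr R δ z γ σ' k (t + 1) (h ++ [x]) x' :=
      fun x' => ih (t + 1) (fun n h a hn => hagree n h a (by omega)) (h ++ [x]) x'
    simp only [hcont]

lemma rtg_markov {Z X A : Type*} [Fintype X] [Fintype A] [Inhabited X]
    (Tr : Z → (X → A → ℝ) → X → A → X → ℝ)
    (R : X → A → Z → ℝ) (δ : ℝ) (z : ℕ → Z) (γ γeq : ℕ → X → A → ℝ) :
    ∀ k t h h' x,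
      rtg Tr R δ z γ (fun n h a => γeq n (h.getLastD default) a) k t h x
        = rtg Tr R δ z γ (fun n h a => γeq n (h.getLastD default) a) k t h' x := by
  intro k
  induction k with
  | zero => intro t h h' x; rfl
  | succ k ih =>
    intro t h h' x
    simp only [rtg, List.getLastD_concat]
    have hcont : ∀ x', rtg Tr R δ z γ (fun n h a => γeq n (h.getLastD default) a) k (t + 1) (h ++ [x]) x'
        = rtg Tr R δ z γ (fun n h a => γeq n (h.getLastD default) a) k (t + 1) (h' ++ [x]) x' :=
      fun x' => ih (t + 1) (h ++ [x]) (h' ++ [x]) x'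
    simp only [hcont]

set_option maxHeartbeats 1000000 in
/-- Theorem 3, converse: if the symmetric Markovian strategy induced by
prescriptions γ̃_t (with mean-field trajectory z_{n+1} = φ(z_n, γ̃_n)) is a mean-field
equilibrium, i.e. dominates every history-dependent deviation from every time and
history, then each γ̃_t(·|x) solves the per-stage fixed-point condition: it maximizes
p ↦ E^{p}[ R(X_t,A_t,z_t) + δ V_{t+1}(φ(z_t,γ̃_t), X_{t+1}) ], where V_{t+1} is the
reward-to-go under stl from time t+1. -/
theorem finite_horizon_MFE_converse
    {Z X A : Type*} [Fintype X] [Fintype A] [Inhabited X] [Nonempty A]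
    (Tr : Z → (X → A → ℝ) → X → A → X → ℝ)
    (hTr0 : ∀ z γ x a x', 0 ≤ Tr z γ x a x')
    (hTr1 : ∀ z γ x a, ∑ x', Tr z γ x a x' = 1)
    (R : X → A → Z → ℝ) (δ : ℝ) (hδ0 : 0 < δ) (hδ1 : δ ≤ 1) (T : ℕ)
    (φ : Z → (X → A → ℝ) → Z)
    (γeq : ℕ → X → A → ℝ)
    (hγ0 : ∀ t x a, 0 ≤ γeq t x a) (hγ1 : ∀ t x, ∑ a, γeq t x a = 1)
    (z : ℕ → Z) (hz : ∀ n, z (n + 1) = φ (z n) (γeq n))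
    (heq : ∀ t, 1 ≤ t → t ≤ T → ∀ (σ : ℕ → List X → A → ℝ),
      (∀ n h a, 0 ≤ σ n h a) → (∀ n h, ∑ a, σ n h a = 1) →
      ∀ (h : List X) (x : X),
        rtg Tr R δ z γeq σ (T + 1 - t) t h x
          ≤ rtg Tr R δ z γeq
              (fun n h a => γeq n (h.getLastD default) a) (T + 1 - t) t h x) :
    ∀ t, 1 ≤ t → t ≤ T → ∀ (x : X) (p : A → ℝ),
      (∀ a, 0 ≤ p a) → (∑ a, p a = 1) →
      (∑ a, p a * (R x a (z t) + δ * ∑ x', Tr (z t) (γeq t) x a x' *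
          rtg Tr R δ z γeq (fun n h a => γeq n (h.getLastD default) a)
            (T - t) (t + 1) [] x'))
        ≤ ∑ a, γeq t x a * (R x a (z t) + δ * ∑ x', Tr (z t) (γeq t) x a x' *
          rtg Tr R δ z γeq (fun n h a => γeq n (h.getLastD default) a)
            (T - t) (t + 1) [] x') := by
  intro t ht hT x p hp0 hp1
  set stl : ℕ → List X → A → ℝ := fun n h a => γeq n (h.getLastD default) a with hstl
  set σ : ℕ → List X → A → ℝ :=
    fun n h a => if n = t then p a else γeq n (h.getLastD default) a with hσ
  have hkey := heq t ht hT σ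
    (fun n h a => by
      by_cases hn : n = t <;> simp [hσ, hn, hp0, hγ0])
    (fun n h => by
      by_cases hn : n = t <;> simp [hσ, hn, hp1, hγ1])
    [] x
  have hTt : T + 1 - t = (T - t) + 1 := by omega
  rw [hTt] at hkey
  simp only [rtg, List.nil_append] at hkey
  have hL : ∀ (x' : X), rtg Tr R δ z γeq σ (T - t) (t + 1) [x] x'
      = rtg Tr R δ z γeq stl (T - t) (t + 1) [] x' := by
    intro x'
    rw [rtg_congr Tr R δ z γeq σ stl (T - t) (t + 1)
      (fun n h a hn => by
        simp only [hσ, hstl]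
        rw [if_neg (by omega : ¬ n = t)]) [x] x']
    exact rtg_markov Tr R δ z γeq γeq (T - t) (t + 1) [x] [] x'
  have hR : ∀ (x' : X), rtg Tr R δ z γeq stl (T - t) (t + 1) [x] x'
      = rtg Tr R δ z γeq stl (T - t) (t + 1) [] x' :=
    fun x' => rtg_markov Tr R δ z γeq γeq (T - t) (t + 1) [x] [] x'
  simp only [hL, hR] at hkey
  have h1 : ∀ a, σ t [x] a = p a := fun a => by simp [hσ]
  have h2 : ∀ a, stl t [x] a = γeq t x a := fun a => by simp [hstl]
  simp only [h1, h2] at hkey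
  exact hkey
end
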